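/- Let μ = μ₁ ⊗ ν be a product probability measure on ℝ × ℝ^k with x = (x₁, x⊥), let c > 0, assume μ₁({0}) = 0 and ∫ ‖x⊥‖² dν < ∞, and let labels be generated by the calibrated logistic model with w* = c·e₁. Define Err = ∫ min(σ(c·t), 1−σ(c·t)) dμ₁(t) (the limiting error), A = ∫ σ(c·x₁)·(1−σ(c·x₁))·x⊥·x⊥ᵀ dμ, and C = ∫ x⊥·x⊥ᵀ dν. If Err > 0, then (1/(4·Err))·A ⪯ (1/4)·C ⪯ (1/(2·Err))·A in the Loewner order. -/

import Mathlib

/-! The factor `σ(c x₁)(1 − σ(c x₁))` of `A` depends only on `x₁` and `μ` is a product, so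
`A = S • C` with `S = ∫ σ(c t)(1 − σ(c t)) dμ₁(t)`, and `C` is positive semidefinite as a Gram
matrix in `L²(ν)`. Both inequalities then reduce to `S ≤ Err ≤ 2 S`, which integrates the
pointwise bounds `p (1 − p) ≤ min p (1 − p) ≤ 2 p (1 − p)` for `p ∈ [0, 1]`. -/

open MeasureTheory

noncomputable def sigmoid (a : ℝ) : ℝ := 1 / (1 + Real.exp (-a))

lemma sigmoid_eq_real_sigmoid : sigmoid = Real.sigmoid :=
  funext fun _ => one_div _

lemma mul_one_sub_le_min {p : ℝ} (h0 : 0 ≤ p) (h1 : p ≤ 1) : p * (1 - p) ≤ min p (1 - p) :=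
  le_min (by nlinarith) (by nlinarith)

lemma min_le_two_mul_mul_one_sub {p : ℝ} (h0 : 0 ≤ p) (h1 : p ≤ 1) :
    min p (1 - p) ≤ 2 * (p * (1 - p)) := by
  rcases le_total p (1 - p) with h | h
  · rw [min_eq_left h]; nlinarith
  · rw [min_eq_right h]; nlinarith

section UnitInterval

variable {α : Type*} [MeasurableSpace α] {μ : Measure α} [IsFiniteMeasure μ] {f : α → ℝ}
  (hf : AEStronglyMeasurable f μ) (hf0 : ∀ x, 0 ≤ f x) (hf1 : ∀ x, f x ≤ 1)
include hf hf0 hf1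

lemma integrable_mul_one_sub_of_mem_unitInterval : Integrable (fun x => f x * (1 - f x)) μ :=
  .of_bound (hf.mul (aestronglyMeasurable_const.sub hf)) 1 <| .of_forall fun x => by
    rw [Real.norm_of_nonneg (by nlinarith [hf0 x, hf1 x])]
    nlinarith [hf0 x, hf1 x]

lemma integrable_min_one_sub_of_mem_unitInterval : Integrable (fun x => min (f x) (1 - f x)) μ :=
  .of_bound (hf.inf (aestronglyMeasurable_const.sub hf)) 1 <| .of_forall fun x => by
    rw [Real.norm_of_nonneg (le_min (hf0 x) (by linarith [hf1 x]))]
    exact (min_le_left _ _).trans (hf1 x)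

lemma integral_mul_one_sub_le_integral_min :
    ∫ x, f x * (1 - f x) ∂μ ≤ ∫ x, min (f x) (1 - f x) ∂μ :=
  integral_mono (integrable_mul_one_sub_of_mem_unitInterval hf hf0 hf1)
    (integrable_min_one_sub_of_mem_unitInterval hf hf0 hf1)
    fun x => mul_one_sub_le_min (hf0 x) (hf1 x)

lemma integral_min_le_two_mul_integral_mul_one_sub :
    ∫ x, min (f x) (1 - f x) ∂μ ≤ 2 * ∫ x, f x * (1 - f x) ∂μ := by
  rw [← integral_const_mul]
  exact integral_mono (integrable_min_one_sub_of_mem_unitInterval hf hf0 hf1)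
    ((integrable_mul_one_sub_of_mem_unitInterval hf hf0 hf1).const_mul 2)
    fun x => min_le_two_mul_mul_one_sub (hf0 x) (hf1 x)

end UnitInterval

lemma posSemidef_matrix_integral_mul {α ι : Type*} [MeasurableSpace α] [Finite ι]
    {μ : Measure α} {f : ι → α → ℝ} (hf : ∀ i, MemLp (f i) 2 μ) :
    (Matrix.of fun i j => ∫ a, f i a * f j a ∂μ).PosSemidef := by
  have h_inner : ∀ i j, ∫ a, f i a * f j a ∂μ = inner ℝ (hf i).toLp (hf j).toLp := by
    intro i j
    rw [L2.inner_def]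
    refine integral_congr_ae ?_
    filter_upwards [(hf i).coeFn_toLp, (hf j).coeFn_toLp] with a hi hj
    simp [hi, hj, mul_comm]
  simp only [h_inner]
  exact Matrix.posSemidef_gram ℝ _

lemma memLp_two_apply_of_integrable_sq_norm {ι : Type*} [Fintype ι]
    {ν : Measure (EuclideanSpace ℝ ι)} (h : Integrable (fun v : EuclideanSpace ℝ ι => ‖v‖ ^ 2) ν)
    (i : ι) : MemLp (fun v : EuclideanSpace ℝ ι => v i) 2 ν :=
  (EuclideanSpace.proj (𝕜 := ℝ) i).comp_memLp'
    ((memLp_two_iff_integrable_sq_norm aestronglyMeasurable_id).2 h)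

theorem fisher_sandwich_general {k : ℕ} (μ₁ : Measure ℝ) (ν : Measure (EuclideanSpace ℝ (Fin k)))
    [IsProbabilityMeasure μ₁] [IsProbabilityMeasure ν] (c : ℝ)
    (hint : Integrable (fun v : EuclideanSpace ℝ (Fin k) => ‖v‖ ^ 2) ν)
    (Err : ℝ) (hErr_def : Err = ∫ t, min (sigmoid (c * t)) (1 - sigmoid (c * t)) ∂μ₁)
    (hErr_pos : 0 < Err)
    (A C : Matrix (Fin k) (Fin k) ℝ)
    (hA : A = Matrix.of fun i j : Fin k =>
        ∫ x : ℝ × EuclideanSpace ℝ (Fin k),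
          sigmoid (c * x.1) * (1 - sigmoid (c * x.1)) * (x.2 i * x.2 j) ∂(μ₁.prod ν))
    (hC : C = Matrix.of fun i j : Fin k => ∫ v, v i * v j ∂ν) :
    ((1 / 4 : ℝ) • C - (1 / (4 * Err)) • A).PosSemidef ∧
      ((1 / (2 * Err)) • A - (1 / 4 : ℝ) • C).PosSemidef := by
  rw [sigmoid_eq_real_sigmoid] at hErr_def hA
  set S := ∫ t, Real.sigmoid (c * t) * (1 - Real.sigmoid (c * t)) ∂μ₁
  have hσ : AEStronglyMeasurable (fun t => Real.sigmoid (c * t)) μ₁ :=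
    (continuous_sigmoid.comp (continuous_const_mul c)).aestronglyMeasurable
  have hS_le : S ≤ Err := hErr_def ▸ integral_mul_one_sub_le_integral_min hσ
    (fun _ => Real.sigmoid_nonneg _) (fun _ => Real.sigmoid_le_one _)
  have hErr_le : Err ≤ 2 * S := hErr_def ▸ integral_min_le_two_mul_integral_mul_one_sub hσ
    (fun _ => Real.sigmoid_nonneg _) (fun _ => Real.sigmoid_le_one _)
  have hA_eq : A = S • C := by
    ext i j
    rw [hA, hC]
    exact integral_prod_mul (fun t => Real.sigmoid (c * t) * (1 - Real.sigmoid (c * t)))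
      (fun v : EuclideanSpace ℝ (Fin k) => v i * v j)
  have hC_psd : C.PosSemidef :=
    hC ▸ posSemidef_matrix_integral_mul (memLp_two_apply_of_integrable_sq_norm hint)
  rw [hA_eq, smul_smul, smul_smul, ← sub_smul, ← sub_smul, one_div_mul_eq_div, one_div_mul_eq_div]
  constructor
  · refine hC_psd.smul (sub_nonneg.2 ?_)
    rw [div_le_iff₀ (by positivity)]
    linarith
  · refine hC_psd.smul (sub_nonneg.2 ?_)
    rw [le_div_iff₀ (by positivity)]
    linarith

/-- Let `μ = μ₁ ⊗ ν` be a product probability measure on `ℝ × ℝᵏ`, `c > 0`,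
`μ₁({0}) = 0`, `∫ ‖x⊥‖² dν < ∞`, with labels generated by the calibrated logistic
model with `w* = c e₁`. With `Err = ∫ min (σ(c t)) (1 − σ(c t)) dμ₁` (the limiting
error), `A = ∫ σ(c x₁)(1 − σ(c x₁)) x⊥ x⊥ᵀ dμ`, `C = ∫ x⊥ x⊥ᵀ dν`, if `Err > 0`
then `(1/(4 Err)) A ⪯ (1/4) C ⪯ (1/(2 Err)) A` in the Loewner order. -/
theorem fisher_sandwich {k : ℕ} (μ₁ : Measure ℝ) (ν : Measure (EuclideanSpace ℝ (Fin k)))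
    [IsProbabilityMeasure μ₁] [IsProbabilityMeasure ν] (c : ℝ) (hc : 0 < c)
    (h0 : μ₁ {0} = 0)
    (hint : Integrable (fun v : EuclideanSpace ℝ (Fin k) => ‖v‖ ^ 2) ν)
    (Err : ℝ) (hErr_def : Err = ∫ t, min (sigmoid (c * t)) (1 - sigmoid (c * t)) ∂μ₁)
    (hErr_pos : 0 < Err)
    (A C : Matrix (Fin k) (Fin k) ℝ)
    (hA : A = Matrix.of fun i j : Fin k =>
        ∫ x : ℝ × EuclideanSpace ℝ (Fin k),
          sigmoid (c * x.1) * (1 - sigmoid (c * x.1)) * (x.2 i * x.2 j) ∂(μ₁.prod ν))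
    (hC : C = Matrix.of fun i j : Fin k => ∫ v, v i * v j ∂ν) :
    ((1 / 4 : ℝ) • C - (1 / (4 * Err)) • A).PosSemidef ∧
      ((1 / (2 * Err)) • A - (1 / 4 : ℝ) • C).PosSemidef :=
  fisher_sandwich_general μ₁ ν c hint Err hErr_def hErr_pos A C hA hC
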